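/- Let G ⊊ ℝⁿ be a domain (nonempty, open, connected, proper subset) and x ∈ G. (i) For every r ∈ (0,1), the j-metric ball B_j(x, log(1+2r)) is contained in the triangular-ratio metric ball B_s(x, r). (ii) For every r ∈ (0, 1/3), B_s(x, r) is contained in B_j(x, log(1 + 2r/(1−3r))). -/

import Mathlib

/-- The triangular ratio metric `s_G(x,y) = sup_{z ∈ ∂G} |x−y|/(|z−x|+|z−y|)`. -/
noncomputable def sMetric {n : ℕ} (G : Set (EuclideanSpace ℝ (Fin n)))
    (x y : EuclideanSpace ℝ (Fin n)) : ℝ :=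
  ⨆ z ∈ frontier G, dist x y / (dist z x + dist z y)

/-- The metric ball `B_s(x,r) = {y ∈ G : s_G(x,y) < r}`. -/
def sBall {n : ℕ} (G : Set (EuclideanSpace ℝ (Fin n))) (x : EuclideanSpace ℝ (Fin n))
    (r : ℝ) : Set (EuclideanSpace ℝ (Fin n)) :=
  {y ∈ G | sMetric G x y < r}

/-- The j-metric `j_G(x,y) = log(1 + |x−y|/min{d_G(x), d_G(y)})`,
where `d_G(z) = dist(z, ∂G)`. -/
noncomputable def jMetric {n : ℕ} (G : Set (EuclideanSpace ℝ (Fin n)))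
    (x y : EuclideanSpace ℝ (Fin n)) : ℝ :=
  Real.log (1 + dist x y /
    min (Metric.infDist x (frontier G)) (Metric.infDist y (frontier G)))

/-- The metric ball `B_j(x,r) = {y ∈ G : j_G(x,y) < r}`. -/
def jBall {n : ℕ} (G : Set (EuclideanSpace ℝ (Fin n))) (x : EuclideanSpace ℝ (Fin n))
    (r : ℝ) : Set (EuclideanSpace ℝ (Fin n)) :=
  {y ∈ G | jMetric G x y < r}

/-!
Write `m = min (d_G x) (d_G y)` and `D = |x - y|`, so that `j_G(x,y) = log (1 + D/m)`.
Every boundary point `z` satisfies `|z - x| + |z - y| ≥ 2m`, hence `s_G(x,y) ≤ D/(2m)`, which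
gives (i). A boundary point nearest to whichever of `x`, `y` realises `m` satisfies
`|z - x| + |z - y| ≤ 2m + D`, hence `s_G(x,y) ≥ D/(2m + D)`; so `s_G(x,y) < r` forces
`D/m < 2r/(1 - r) ≤ 2r/(1 - 3r)`, which gives (ii).
-/

open Metric

noncomputable def minInfDist {α : Type*} [MetricSpace α] (E : Set α) (x y : α) : ℝ :=
  min (infDist x E) (infDist y E)

section MetricSpace

variable {α : Type*} [MetricSpace α] {E : Set α} {x y z : α}

lemma two_mul_minInfDist_le_dist_add_dist (hz : z ∈ E) :
    2 * minInfDist E x y ≤ dist z x + dist z y := by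
  have hx : minInfDist E x y ≤ dist z x :=
    (min_le_left _ _).trans (dist_comm z x ▸ infDist_le_dist_of_mem hz)
  have hy : minInfDist E x y ≤ dist z y :=
    (min_le_right _ _).trans (dist_comm z y ▸ infDist_le_dist_of_mem hz)
  linarith

lemma exists_dist_add_dist_le_two_mul_infDist_add_dist [ProperSpace α] (hE : IsClosed E)
    (hne : E.Nonempty) (x y : α) :
    ∃ z ∈ E, dist z x + dist z y ≤ 2 * infDist x E + dist x y := by
  obtain ⟨z, hz, hzx⟩ := hE.exists_infDist_eq_dist hne x
  exact ⟨z, hz, by linarith [dist_triangle z x y, dist_comm x z]⟩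

lemma exists_dist_add_dist_le_two_mul_minInfDist_add_dist [ProperSpace α] (hE : IsClosed E)
    (hne : E.Nonempty) (x y : α) :
    ∃ z ∈ E, dist z x + dist z y ≤ 2 * minInfDist E x y + dist x y := by
  rcases min_cases (infDist x E) (infDist y E) with ⟨hmin, -⟩ | ⟨hmin, -⟩
  · rw [minInfDist, hmin]
    exact exists_dist_add_dist_le_two_mul_infDist_add_dist hE hne x y
  · obtain ⟨z, hz, hzle⟩ := exists_dist_add_dist_le_two_mul_infDist_add_dist hE hne y x
    rw [minInfDist, hmin, dist_comm x y]
    exact ⟨z, hz, by linarith⟩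

end MetricSpace

section Euclidean

variable {n : ℕ} {G : Set (EuclideanSpace ℝ (Fin n))} {x y z : EuclideanSpace ℝ (Fin n)}
  {r : ℝ}

lemma minInfDist_frontier_pos (hG : IsOpen G) (hfr : (frontier G).Nonempty) (hx : x ∈ G)
    (hy : y ∈ G) : 0 < minInfDist (frontier G) x y := by
  have hpos : ∀ w ∈ G, 0 < infDist w (frontier G) := fun w hw =>
    (isClosed_frontier.notMem_iff_infDist_pos hfr).1 fun hwf => (hG.frontier_eq ▸ hwf).2 hw
  exact lt_min (hpos x hx) (hpos y hy)

lemma jMetric_lt_log_one_add_iff {c : ℝ} (hm : 0 < minInfDist (frontier G) x y) (hc : 0 ≤ c) :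
    jMetric G x y < Real.log (1 + c) ↔ dist x y / minInfDist (frontier G) x y < c := by
  rw [jMetric, ← minInfDist, Real.log_lt_log_iff (by positivity) (by linarith),
    add_lt_add_iff_left]

lemma div_le_sMetric (hz : z ∈ frontier G) :
    dist x y / (dist z x + dist z y) ≤ sMetric G x y := by
  have hle_one : ∀ w, dist x y / (dist w x + dist w y) ≤ 1 := fun w =>
    div_le_one_of_le₀ (dist_comm x w ▸ dist_triangle x w y) (by positivity)
  have hbdd : BddAbove (Set.range fun w =>
      ⨆ _ : w ∈ frontier G, dist x y / (dist w x + dist w y)) :=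
    ⟨1, by
      rintro _ ⟨w, rfl⟩
      exact Real.iSup_le (fun _ => hle_one w) zero_le_one⟩
  calc dist x y / (dist z x + dist z y)
      = ⨆ _ : z ∈ frontier G, dist x y / (dist z x + dist z y) := by rw [ciSup_pos hz]
    _ ≤ sMetric G x y := le_ciSup hbdd z

lemma sMetric_le_dist_div_two_mul_minInfDist (hm : 0 < minInfDist (frontier G) x y) :
    sMetric G x y ≤ dist x y / (2 * minInfDist (frontier G) x y) :=
  Real.iSup_le (fun _ => Real.iSup_le (fun hz => div_le_div_of_nonneg_left dist_nonneg
    (by positivity) (two_mul_minInfDist_le_dist_add_dist hz)) (by positivity)) (by positivity)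

lemma dist_div_two_mul_minInfDist_add_dist_le_sMetric (hfr : (frontier G).Nonempty)
    (hm : 0 < minInfDist (frontier G) x y) :
    dist x y / (2 * minInfDist (frontier G) x y + dist x y) ≤ sMetric G x y := by
  obtain ⟨z, hz, hzle⟩ :=
    exists_dist_add_dist_le_two_mul_minInfDist_add_dist isClosed_frontier hfr x y
  have hden : 0 < dist z x + dist z y := by
    linarith [two_mul_minInfDist_le_dist_add_dist (x := x) (y := y) hz]
  exact (div_le_div_of_nonneg_left dist_nonneg hden hzle).trans (div_le_sMetric hz)

lemma jBall_subset_jBall {r r' : ℝ} (h : r ≤ r') : jBall G x r ⊆ jBall G x r' :=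
  fun _ ⟨hy, hj⟩ => ⟨hy, hj.trans_le h⟩

lemma jBall_log_one_add_two_mul_subset_sBall (hG : IsOpen G) (hfr : (frontier G).Nonempty)
    (hx : x ∈ G) (hr : 0 ≤ r) : jBall G x (Real.log (1 + 2 * r)) ⊆ sBall G x r := by
  rintro y ⟨hy, hj⟩
  have hm := minInfDist_frontier_pos hG hfr hx hy
  rw [jMetric_lt_log_one_add_iff hm (by positivity), div_lt_iff₀ hm] at hj
  refine ⟨hy, (sMetric_le_dist_div_two_mul_minInfDist hm).trans_lt ?_⟩
  rw [div_lt_iff₀ (by positivity)]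
  linarith

lemma sBall_subset_jBall_log_one_add (hG : IsOpen G) (hfr : (frontier G).Nonempty) (hx : x ∈ G)
    (hr₀ : 0 ≤ r) (hr₁ : r < 1) :
    sBall G x r ⊆ jBall G x (Real.log (1 + 2 * r / (1 - r))) := by
  rintro y ⟨hy, hs⟩
  have hm := minInfDist_frontier_pos hG hfr hx hy
  have hlt := (dist_div_two_mul_minInfDist_add_dist_le_sMetric hfr hm).trans_lt hs
  rw [div_lt_iff₀ (by positivity)] at hlt
  refine ⟨hy, ?_⟩
  rw [jMetric_lt_log_one_add_iff hm (div_nonneg (by positivity) (by linarith)),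
    div_lt_div_iff₀ hm (by linarith)]
  linarith

end Euclidean

theorem jBall_subset_sBall_and_sBall_subset_jBall_general (n : ℕ)
    (G : Set (EuclideanSpace ℝ (Fin n))) (hGo : IsOpen G)
    (hGp : G ≠ Set.univ) (x : EuclideanSpace ℝ (Fin n)) (hx : x ∈ G) :
    (∀ r : ℝ, r ∈ Set.Ioo (0:ℝ) 1 →
      jBall G x (Real.log (1 + 2 * r)) ⊆ sBall G x r) ∧
    (∀ r : ℝ, r ∈ Set.Ioo (0:ℝ) (1/3) →
      sBall G x r ⊆ jBall G x (Real.log (1 + 2 * r / (1 - 3 * r)))) := by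
  have hfr : (frontier G).Nonempty := nonempty_frontier_iff.2 ⟨⟨x, hx⟩, hGp⟩
  refine ⟨fun r ⟨hr₀, _⟩ => jBall_log_one_add_two_mul_subset_sBall hGo hfr hx hr₀.le,
    fun r ⟨hr₀, hr₃⟩ => (sBall_subset_jBall_log_one_add hGo hfr hx hr₀.le (by linarith)).trans
      (jBall_subset_jBall ?_)⟩
  have hradius : 2 * r / (1 - r) ≤ 2 * r / (1 - 3 * r) :=
    div_le_div_of_nonneg_left (by positivity) (by linarith) (by linarith)
  have hpos : 0 ≤ 2 * r / (1 - r) := div_nonneg (by positivity) (by linarith)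
  exact Real.log_le_log (by linarith) (by linarith)

/-- Let G ⊊ ℝⁿ be a domain (nonempty, open, connected, proper subset) and x ∈ G.
(i) For every r ∈ (0,1), B_j(x, log(1+2r)) ⊆ B_s(x, r).
(ii) For every r ∈ (0, 1/3), B_s(x, r) ⊆ B_j(x, log(1 + 2r/(1−3r))). -/
theorem jBall_subset_sBall_and_sBall_subset_jBall (n : ℕ)
    (G : Set (EuclideanSpace ℝ (Fin n))) (hGo : IsOpen G) (hGc : IsConnected G)
    (hGp : G ≠ Set.univ) (x : EuclideanSpace ℝ (Fin n)) (hx : x ∈ G) :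
    (∀ r : ℝ, r ∈ Set.Ioo (0:ℝ) 1 →
      jBall G x (Real.log (1 + 2 * r)) ⊆ sBall G x r) ∧
    (∀ r : ℝ, r ∈ Set.Ioo (0:ℝ) (1/3) →
      sBall G x r ⊆ jBall G x (Real.log (1 + 2 * r / (1 - 3 * r)))) :=
  jBall_subset_sBall_and_sBall_subset_jBall_general n G hGo hGp x hx
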